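/- arXiv:2011.12500 — 2 statements merged into one kernel-verified Lean document; each statement's English description precedes it below -/
import Mathlib

section
/- If a multigraph G has a vertex v with at least r+1 loops, then every vertex set X with G - X an r-pseudoforest must contain v. Consequently (G, k) is a yes-instance of r-pseudoforest deletion iff (G - v, k-1) is. -/
/-- Adjacency in the sub-multigraph of `(V, E, ends)` with vertex set `S` and
edge set `T`. -/
def mAdjOn {V E : Type*} (ends : E → Sym2 V) (S : Set V) (T : Set E) (u w : V) : Prop :=
  u ∈ S ∧ w ∈ S ∧ ∃ e ∈ T, ends e = s(u, w)

/-- The connected component of `v` in the sub-multigraph `(S, T)`. -/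
def mCompOn {V E : Type*} (ends : E → Sym2 V) (S : Set V) (T : Set E) (v : V) : Set V :=
  {u ∈ S | Relation.ReflTransGen (mAdjOn ends S T) v u}

/-- The edges of the connected component of `v` in the sub-multigraph `(S, T)`. -/
def mCompEdgesOn {V E : Type*} (ends : E → Sym2 V) (S : Set V) (T : Set E) (v : V) : Set E :=
  {e ∈ T | ∀ u ∈ ends e, u ∈ mCompOn ends S T v}

/-- The sub-multigraph `(S, T)` of `(V, E, ends)` is an `r`-pseudoforest:
every connected component `C` satisfies `|E(C)| ≤ |V(C)| + r - 1`,
which for connected multigraphs is equivalent to becoming a forest after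
deleting at most `r` edges. -/
def IsRPFOn {V E : Type*} (ends : E → Sym2 V) (S : Set V) (T : Set E) (r : ℕ) : Prop :=
  ∀ v ∈ S, ((mCompEdgesOn ends S T v).ncard : ℤ) ≤ ((mCompOn ends S T v).ncard : ℤ) + r - 1

/-!
The component `C` of `v` is connected, so it has at least `|C| - 1` non-loop edges (a spanning
tree of its underlying simple graph), and on top of those it contains the `r + 1` loops at `v`.
Hence `|E(C)| ≥ |C| + r`, violating the pseudoforest bound; so `v` must be deleted, and deletion
sets of size `k` containing `v` correspond to deletion sets of size `k - 1` of `G - v`.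
-/

section Component

variable {V E : Type*} (ends : E → Sym2 V) (S : Set V) (T : Set E) {v : V}

lemma mem_mCompOn_self (hv : v ∈ S) : v ∈ mCompOn ends S T v :=
  ⟨hv, .refl⟩

lemma loops_subset_mCompEdgesOn (hv : v ∈ S) :
    {e ∈ T | ends e = s(v, v)} ⊆ mCompEdgesOn ends S T v := by
  rintro e ⟨heT, hloop⟩
  refine ⟨heT, fun u hu => ?_⟩
  rw [hloop, Sym2.mem_iff, or_self] at hu
  subst hu
  exact mem_mCompOn_self ends S T hv

/-- The simple graph underlying the component of `v`: loops and edge multiplicities are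
forgotten. -/
def mCompGraph (v : V) : SimpleGraph (mCompOn ends S T v) :=
  SimpleGraph.fromRel fun a b => mAdjOn ends S T a b

lemma mCompGraph_connected (hv : v ∈ S) : (mCompGraph ends S T v).Connected := by
  let base : mCompOn ends S T v := ⟨v, mem_mCompOn_self ends S T hv⟩
  have reach : ∀ u, Relation.ReflTransGen (mAdjOn ends S T) v u →
      ∀ hu : u ∈ mCompOn ends S T v, (mCompGraph ends S T v).Reachable base ⟨u, hu⟩ := by
    intro u hvu
    induction hvu with
    | refl => exact fun _ => .refl _
    | @tail w u hvw hwu ih =>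
      intro hu
      have hw : w ∈ mCompOn ends S T v := ⟨hwu.1, hvw⟩
      refine (ih hw).trans ?_
      by_cases hwu' : w = u
      · subst hwu'; rfl
      · exact SimpleGraph.Adj.reachable ⟨fun h => hwu' (congrArg Subtype.val h), .inl hwu⟩
  have : Nonempty (mCompOn ends S T v) := ⟨base⟩
  exact ⟨fun a b => (reach a a.2.2 a.2).symm.trans (reach b b.2.2 b.2)⟩

lemma ncard_mCompOn_le_ncard_nonloops_add_one [Finite E] (hv : v ∈ S) :
    (mCompOn ends S T v).ncard ≤
      {e ∈ mCompEdgesOn ends S T v | ¬ (ends e).IsDiag}.ncard + 1 := by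
  set G := mCompGraph ends S T v
  set N := {e ∈ mCompEdgesOn ends S T v | ¬ (ends e).IsDiag}
  have hsub : Sym2.map Subtype.val '' G.edgeSet ⊆ ends '' N := by
    rintro _ ⟨z, hz, rfl⟩
    induction z using Sym2.ind with
    | _ a b =>
      obtain ⟨hab, hadj⟩ := (SimpleGraph.fromRel_adj _ a b).mp (G.mem_edgeSet.mp hz)
      have hab' : (a : V) ≠ b := fun h => hab (Subtype.ext h)
      obtain ⟨e, heT, hends⟩ : ∃ e ∈ T, ends e = s((a : V), b) := by
        rcases hadj with ⟨-, -, e, heT, he⟩ | ⟨-, -, e, heT, he⟩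
        · exact ⟨e, heT, he⟩
        · exact ⟨e, heT, he.trans Sym2.eq_swap⟩
      refine ⟨e, ⟨⟨heT, fun u hu => ?_⟩, ?_⟩, hends⟩
      · rw [hends, Sym2.mem_iff] at hu
        rcases hu with rfl | rfl
        exacts [a.2, b.2]
      · rwa [hends, Sym2.mk_isDiag_iff]
  calc (mCompOn ends S T v).ncard
      = Nat.card (mCompOn ends S T v) := (Nat.card_coe_set_eq _).symm
    _ ≤ Nat.card G.edgeSet + 1 :=
      (mCompGraph_connected ends S T hv).card_vert_le_card_edgeSet_add_one
    _ = (Sym2.map Subtype.val '' G.edgeSet).ncard + 1 := by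
      rw [Set.ncard_image_of_injective _ (Sym2.map.injective Subtype.val_injective),
        Nat.card_coe_set_eq]
    _ ≤ (ends '' N).ncard + 1 := Nat.add_le_add_right (Set.ncard_le_ncard hsub) 1
    _ ≤ N.ncard + 1 := Nat.add_le_add_right Set.ncard_image_le 1

theorem not_isRPFOn_of_loops [Finite E] (r : ℕ) (hv : v ∈ S)
    (hloops : r + 1 ≤ {e ∈ T | ends e = s(v, v)}.ncard) : ¬ IsRPFOn ends S T r := by
  intro hRPF
  set N := {e ∈ mCompEdgesOn ends S T v | ¬ (ends e).IsDiag}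
  set L := {e ∈ T | ends e = s(v, v)}
  have hdisj : Disjoint N L := Set.disjoint_left.mpr fun e he hL =>
    he.2 (by rw [hL.2]; exact Sym2.mk_isDiag_iff.mpr rfl)
  have hNL : N.ncard + L.ncard ≤ (mCompEdgesOn ends S T v).ncard := by
    rw [← Set.ncard_union_eq hdisj]
    exact Set.ncard_le_ncard (Set.union_subset (fun e he => he.1)
      (loops_subset_mCompEdgesOn ends S T hv)) (Set.toFinite _)
  have hC : (mCompOn ends S T v).ncard ≤ N.ncard + 1 :=
    ncard_mCompOn_le_ncard_nonloops_add_one ends S T hv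
  have := hRPF v hv
  omega

end Component

/-- If a vertex `v` carries at least `r+1` loops, then every `r`-pseudoforest
deletion set must contain `v`; consequently `(G, k)` is a yes-instance of
`r`-pseudoforest deletion iff `(G - v, k - 1)` is. -/
theorem loop_vertex_forced
    {V E : Type*} [Fintype V] [Fintype E] (ends : E → Sym2 V)
    (r k : ℕ) (hk : 1 ≤ k) (v : V)
    (hloops : r + 1 ≤ {e : E | ends e = s(v, v)}.ncard) :
    (∀ X : Set V, IsRPFOn ends Xᶜ Set.univ r → v ∈ X) ∧
    ((∃ X : Set V, X.ncard ≤ k ∧ IsRPFOn ends Xᶜ Set.univ r) ↔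
      (∃ X : Set V, v ∉ X ∧ X.ncard ≤ k - 1 ∧ IsRPFOn ends ({v} ∪ X)ᶜ Set.univ r)) := by
  have forced : ∀ X : Set V, IsRPFOn ends Xᶜ Set.univ r → v ∈ X := fun X hX => by
    by_contra hv
    exact not_isRPFOn_of_loops ends Xᶜ Set.univ r hv (by simpa only [Set.sep_univ]) hX
  refine ⟨forced, ?_, ?_⟩
  · rintro ⟨X, hXk, hX⟩
    have hvX := forced X hX
    refine ⟨X \ {v}, fun h => h.2 rfl, ?_, ?_⟩
    · rw [Set.ncard_sdiff_singleton_of_mem hvX]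
      omega
    · rwa [Set.union_sdiff_cancel (Set.singleton_subset_iff.mpr hvX)]
  · rintro ⟨X, -, hXk, hX⟩
    refine ⟨{v} ∪ X, ?_, hX⟩
    have := Set.ncard_union_le {v} X
    rw [Set.ncard_singleton] at this
    omega
end

section
/- Reduction Rule 4 is safe: if v is a vertex of degree at most 1 in G, then for any k, G has a set X ⊆ V(G) \ {v} with |X| ≤ k and G - X an r-pseudoforest if and only if G - v has a set X of size at most k making (G - v) - X an r-pseudoforest; moreover (G,k) is a yes-instance iff (G - v, k) is. -/
/-- A simple graph is an `r`-pseudoforest if one can delete a set of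
edges, at most `r` from each connected component, so that the result is a forest. -/
def IsRPseudoforest {V : Type*} (H : SimpleGraph V) (r : ℕ) : Prop :=
  ∃ D ⊆ H.edgeSet, (H.deleteEdges D).IsAcyclic ∧
    ∀ c : H.ConnectedComponent,
      {e ∈ D | ∃ v ∈ e, H.connectedComponentMk v = c}.ncard ≤ r

/-!
A vertex `v` with at most one neighbour lies on no cycle, and no path between two other vertices
passes through it. So if deleting the edge set `D` turns `G - X - v` into a forest, deleting `D`
turns `G - X` into a forest too, and each component of `G - X` meets the edges of `D` of only one
component of `G - X - v`. Conversely, `r`-pseudoforests are closed under taking induced subgraphs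
(indeed under graph embeddings), and a solution containing `v` remains one after dropping `v`.
-/

namespace SimpleGraph

variable {V : Type*} {G : SimpleGraph V}

lemma Walk.IsCycle.notMem_support_of_subsingleton_neighborSet {x u : V} {p : G.Walk u u}
    (hp : p.IsCycle) (hx : (G.neighborSet x).Subsingleton) : x ∉ p.support := by
  classical
  intro hxp
  have hq := hp.rotate hxp
  exact hq.snd_ne_penultimate <|
    hx (Walk.adj_snd hq.not_nil) (Walk.adj_penultimate hq.not_nil).symm

lemma Reachable.induce_of_subsingleton_neighborSet {s : Set V}
    (hs : ∀ v ∉ s, (G.neighborSet v).Subsingleton) {a b : s} (h : G.Reachable a b) :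
    (G.induce s).Reachable a b := by
  obtain ⟨p, hp⟩ := h.exists_isPath
  refine ⟨p.induce s fun w hw => ?_⟩
  by_contra hws
  exact hp.isTrail.not_mem_support_of_subsingleton_neighborSet (by grind) (by grind) (hs _ hws) hw

lemma IsAcyclic.of_induce_of_subsingleton_neighborSet {s : Set V}
    (hs : ∀ v ∉ s, (G.neighborSet v).Subsingleton) (h : (G.induce s).IsAcyclic) :
    G.IsAcyclic := by
  intro a p hp
  have hps : ∀ w ∈ p.support, w ∈ s := fun w hw => by
    by_contra hws
    exact hp.notMem_support_of_subsingleton_neighborSet (hs w hws) hw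
  exact h (p.induce s hps) (Walk.IsCycle.of_map (f := (Embedding.induce s).toHom) (by simpa))

end SimpleGraph

open SimpleGraph

namespace IsRPseudoforest

variable {V W : Type*}

lemma embedding [Finite W] {H : SimpleGraph V} {H' : SimpleGraph W} {r : ℕ}
    (f : H ↪g H') (h : IsRPseudoforest H' r) : IsRPseudoforest H r := by
  obtain ⟨D', -, hacyclic, hcount⟩ := h
  refine ⟨{e ∈ H.edgeSet | e.map f ∈ D'}, fun e he => he.1, ?_, fun c => ?_⟩
  · let g : H.deleteEdges {e ∈ H.edgeSet | e.map f ∈ D'} →g H'.deleteEdges D' :=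
      ⟨f, fun {a b} hab => by
        rw [deleteEdges_adj] at hab ⊢
        exact ⟨f.map_adj_iff.mpr hab.1, fun hD' => hab.2 ⟨hab.1, hD'⟩⟩⟩
    exact hacyclic.comap g f.injective
  · refine le_trans (Set.ncard_le_ncard_of_injOn (Sym2.map f) ?_
      (Sym2.map.injective f.injective).injOn) (hcount (c.map f.toHom))
    rintro e ⟨⟨-, he⟩, w, hw, rfl⟩
    exact ⟨he, f w, Sym2.mem_map.mpr ⟨w, hw, rfl⟩, rfl⟩

lemma of_induce [Finite V] {G : SimpleGraph V} {s : Set V} {r : ℕ}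
    (hs : ∀ v ∉ s, (G.neighborSet v).Subsingleton) (h : IsRPseudoforest (G.induce s) r) :
    IsRPseudoforest G r := by
  obtain ⟨D, hDs, hacyclic, hcount⟩ := h
  let φ := Embedding.induce (G := G) s
  refine ⟨Sym2.map φ '' D, ?_, ?_, fun c => ?_⟩
  · rintro _ ⟨e, he, rfl⟩
    exact φ.toHom.map_mem_edgeSet (hDs he)
  · refine IsAcyclic.of_induce_of_subsingleton_neighborSet (s := s)
      (fun v hv => (hs v hv).anti (neighborSet_mono (deleteEdges_le _) v))
      (hacyclic.anti fun a b hab => ?_)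
    rw [induce_adj, deleteEdges_adj] at hab
    rw [deleteEdges_adj, induce_adj]
    exact ⟨hab.1, fun hD => hab.2 ⟨_, hD, rfl⟩⟩
  by_cases hc : ∃ c', ConnectedComponent.map φ.toHom c' = c
  · obtain ⟨c', rfl⟩ := hc
    have hsub : {e ∈ Sym2.map φ '' D |
          ∃ w ∈ e, G.connectedComponentMk w = c'.map φ.toHom} ⊆
        Sym2.map φ '' {e ∈ D | ∃ w ∈ e, (G.induce s).connectedComponentMk w = c'} := by
      rintro _ ⟨⟨e, he, rfl⟩, w, hw, hwc⟩
      obtain ⟨w', hw', rfl⟩ := Sym2.mem_map.mp hw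
      refine ⟨e, ⟨he, w', hw', ?_⟩, rfl⟩
      induction c' using ConnectedComponent.ind with | h a => ?_
      rw [ConnectedComponent.map_mk, ConnectedComponent.eq] at hwc
      exact ConnectedComponent.eq.mpr (hwc.induce_of_subsingleton_neighborSet hs)
    calc _ ≤ _ := Set.ncard_le_ncard hsub
      _ = _ := Set.ncard_image_of_injective _ (Sym2.map.injective φ.injective)
      _ ≤ r := hcount c'
  · refine ((Set.ncard_eq_zero (Set.toFinite _)).mpr
      (Set.eq_empty_of_forall_notMem ?_)).trans_le r.zero_le
    rintro _ ⟨⟨e, -, rfl⟩, w, hw, rfl⟩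
    obtain ⟨w', -, rfl⟩ := Sym2.mem_map.mp hw
    exact hc ⟨_, ConnectedComponent.map_mk _ w'⟩

lemma induce_of_subsingleton_neighborSet [Finite V] {G : SimpleGraph V}
    {s t : Set V} {r : ℕ} (ht : ∀ v ∈ t \ s, (G.neighborSet v).Subsingleton)
    (h : IsRPseudoforest (G.induce s) r) : IsRPseudoforest (G.induce t) r := by
  refine of_induce (s := Subtype.val ⁻¹' s) (fun v hv => ?_) (h.embedding ?_)
  · rw [neighborSet_induce]
    exact (ht v ⟨v.2, hv⟩).preimage Subtype.val_injective
  · refine ⟨⟨fun w => ⟨w.1.1, w.2⟩, fun a b hab => ?_⟩, Iff.rfl⟩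
    exact Subtype.ext (Subtype.ext (Subtype.mk.inj hab))

end IsRPseudoforest

theorem reduction_rule_4_safe_general
    {V : Type*} [Fintype V] (G : SimpleGraph V)
    [DecidableRel G.Adj] (r k : ℕ) (v : V) (hv : G.degree v ≤ 1) :
    ((∃ X : Set V, v ∉ X ∧ X.ncard ≤ k ∧ IsRPseudoforest (G.induce Xᶜ) r) ↔
      (∃ X : Set V, v ∉ X ∧ X.ncard ≤ k ∧ IsRPseudoforest (G.induce (insert v X)ᶜ) r)) ∧
    ((∃ X : Set V, X.ncard ≤ k ∧ IsRPseudoforest (G.induce Xᶜ) r) ↔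
      (∃ X : Set V, v ∉ X ∧ X.ncard ≤ k ∧ IsRPseudoforest (G.induce (insert v X)ᶜ) r)) := by
  have hleaf : (G.neighborSet v).Subsingleton := (Set.subsingleton_coe _).mp <|
    Fintype.card_le_one_iff_subsingleton.mp ((card_neighborSet_eq_degree G v).trans_le hv)
  have restrict {X : Set V} (h : IsRPseudoforest (G.induce Xᶜ) r) :
      IsRPseudoforest (G.induce (insert v X)ᶜ) r :=
    h.embedding (G.induceHomOfLE (Set.compl_subset_compl.mpr (Set.subset_insert v X)))
  have extend {X : Set V} (h : IsRPseudoforest (G.induce (insert v X)ᶜ) r) :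
      IsRPseudoforest (G.induce Xᶜ) r :=
    h.induce_of_subsingleton_neighborSet fun w ⟨hwX, hwvX⟩ =>
      (Set.mem_insert_iff.mp (not_not.mp hwvX)).resolve_right hwX ▸ hleaf
  refine ⟨exists_congr fun _ => and_congr_right fun _ => and_congr_right fun _ =>
    ⟨restrict, extend⟩, ⟨?_, fun ⟨X, _, hX, h⟩ => ⟨X, hX, extend h⟩⟩⟩
  rintro ⟨X, hX, h⟩
  refine ⟨X \ {v}, by simp, (Set.ncard_le_ncard Set.sdiff_subset).trans hX, ?_⟩
  rw [Set.insert_sdiff_singleton]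
  exact restrict h

/-- Reduction Rule 4 is safe: if `v` has degree at most 1 in `G`, then `G` has a
solution avoiding `v` of size at most `k` iff `G - v` has a solution of size at
most `k`; moreover `(G, k)` is a yes-instance iff `(G - v, k)` is. -/
theorem reduction_rule_4_safe
    {V : Type*} [Fintype V] [DecidableEq V] (G : SimpleGraph V)
    [DecidableRel G.Adj] (r k : ℕ) (v : V) (hv : G.degree v ≤ 1) :
    ((∃ X : Set V, v ∉ X ∧ X.ncard ≤ k ∧ IsRPseudoforest (G.induce Xᶜ) r) ↔
      (∃ X : Set V, v ∉ X ∧ X.ncard ≤ k ∧ IsRPseudoforest (G.induce (insert v X)ᶜ) r)) ∧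
    ((∃ X : Set V, X.ncard ≤ k ∧ IsRPseudoforest (G.induce Xᶜ) r) ↔
      (∃ X : Set V, v ∉ X ∧ X.ncard ≤ k ∧ IsRPseudoforest (G.induce (insert v X)ᶜ) r)) :=
  reduction_rule_4_safe_general G r k v hv
end
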